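/- With sin_q(z) = sum_{n≥0} (-1)^n q^(2n^2+n) z^(2n+1)/[2n+1]_q! and cos_q(z) = sum_{n≥0} (-1)^n z^(2n)/[2n]_q! as formal power series over Q(q), one has sin_q(z)·sin_{1/q}(z) + cos_q(z)·cos_{1/q}(z) = 1. -/

import Mathlib

/-!
Since `[m]_{1/q}! = q^(-(m choose 2)) [m]_q!`, the coefficient of `z^(2m)` in
`sin_q sin_{1/q} + cos_{1/q} cos_q` is
`(-1)^m / [2m]_q! · ∑_k (-1)^k q^(k choose 2) [2m choose k]_q`, while the odd coefficients
vanish by parity. The sum is the `q`-binomial theorem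
`∏_{i<n} (1 + q^i t) = ∑_k q^(k choose 2) [n choose k]_q t^k` at `t = -1`, hence `0` unless
`m = 0`.
-/

noncomputable section
open Finset PowerSeries

abbrev Fq : Type := RatFunc ℚ

/-- The variable `q` as element of the field of rational functions `ℚ(q)`. -/
def qv : Fq := RatFunc.X

/-- The q-integer `[m]_q = 1 + q + ... + q^(m-1)`. -/
def qInt (x : Fq) (m : ℕ) : Fq := ∑ i ∈ Finset.range m, x ^ i

/-- The q-factorial `[m]_q! = [1]_q [2]_q ⋯ [m]_q`. -/
def qFact (x : Fq) (m : ℕ) : Fq := ∏ i ∈ Finset.range m, qInt x (i + 1)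

/-- `sin_q(z) = ∑ (-1)^n q^(2n^2+n) z^(2n+1)/[2n+1]_q!`. -/
def qsin (x : Fq) : PowerSeries Fq :=
  PowerSeries.mk fun m =>
    if m % 2 = 1 then (-1 : Fq) ^ (m / 2) * x ^ (2 * (m / 2) ^ 2 + m / 2) / qFact x m else 0

/-- `cos_q(z) = ∑ (-1)^n z^(2n)/[2n]_q!`. -/
def qcos (x : Fq) : PowerSeries Fq :=
  PowerSeries.mk fun m => if m % 2 = 0 then (-1 : Fq) ^ (m / 2) / qFact x m else 0

lemma qInt_add (x : Fq) (a b : ℕ) : qInt x (a + b) = qInt x a + x ^ a * qInt x b := by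
  simp only [qInt, sum_range_add, mul_sum, pow_add]

lemma qFact_succ (x : Fq) (m : ℕ) : qFact x (m + 1) = qFact x m * qInt x (m + 1) :=
  prod_range_succ _ _

lemma qFact_ne_zero {x : Fq} (hx : ∀ m ≠ 0, x ^ m ≠ 1) (m : ℕ) : qFact x m ≠ 0 := by
  refine prod_ne_zero_iff.mpr fun i _ h => hx (i + 1) i.succ_ne_zero ?_
  have := geom_sum_mul x (i + 1)
  rw [← qInt, h, zero_mul] at this
  exact sub_eq_zero.mp this.symm

lemma pow_mul_qInt_inv {x : Fq} (hx : x ≠ 0) (m : ℕ) :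
    x ^ m * qInt x⁻¹ (m + 1) = qInt x (m + 1) := by
  rw [qInt, mul_sum, qInt, ← sum_range_reflect]
  refine sum_congr rfl fun i hi => ?_
  rw [mem_range] at hi
  rw [inv_pow, Nat.add_sub_cancel, ← pow_sub₀ x hx (Nat.sub_le m i),
    Nat.sub_sub_self (by omega)]

lemma qFact_inv_mul_pow_choose_two {x : Fq} (hx : x ≠ 0) (m : ℕ) :
    qFact x⁻¹ m * x ^ m.choose 2 = qFact x m := by
  induction m with
  | zero => simp [qFact]
  | succ m ih =>
    rw [qFact_succ, qFact_succ, Nat.choose_succ_succ', Nat.choose_one_right, pow_add,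
      ← ih, ← pow_mul_qInt_inv hx]
    ring

lemma qFact_inv {x : Fq} (hx : x ≠ 0) (m : ℕ) :
    qFact x⁻¹ m = qFact x m / x ^ m.choose 2 := by
  rw [eq_div_iff (pow_ne_zero _ hx), qFact_inv_mul_pow_choose_two hx]

def qChoose (x : Fq) : ℕ → ℕ → Fq
  | _, 0 => 1
  | 0, _ + 1 => 0
  | n + 1, k + 1 => qChoose x n k + x ^ (k + 1) * qChoose x n (k + 1)

lemma qChoose_succ_succ (x : Fq) (n k : ℕ) :
    qChoose x (n + 1) (k + 1) = qChoose x n k + x ^ (k + 1) * qChoose x n (k + 1) := rfl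

lemma qChoose_eq_zero_of_lt (x : Fq) : ∀ {n k : ℕ}, n < k → qChoose x n k = 0
  | 0, _ + 1, _ => rfl
  | n + 1, k + 1, h => by
    rw [qChoose_succ_succ, qChoose_eq_zero_of_lt x (by omega : n < k),
      qChoose_eq_zero_of_lt x (by omega : n < k + 1), mul_zero, add_zero]

lemma qFact_mul_qFact_mul_qChoose (x : Fq) (a b : ℕ) :
    qFact x a * qFact x b * qChoose x (a + b) a = qFact x (a + b) := by
  induction hs : a + b generalizing a b with
  | zero =>
    obtain ⟨rfl, rfl⟩ : a = 0 ∧ b = 0 := by omega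
    simp [qFact, qChoose]
  | succ s ih =>
    obtain _ | j := a
    · rw [zero_add] at hs
      simp [hs, qFact, qChoose]
    obtain rfl : s = j + b := by omega
    have first : qFact x (j + 1) * qFact x b * qChoose x (j + b) j
        = qInt x (j + 1) * qFact x (j + b) := by
      rw [qFact_succ, ← ih j b rfl]
      ring
    have second : qFact x (j + 1) * qFact x b * (x ^ (j + 1) * qChoose x (j + b) (j + 1))
        = x ^ (j + 1) * qInt x b * qFact x (j + b) := by
      obtain _ | c := b
      · simp [qChoose_eq_zero_of_lt, qInt]
      rw [qFact_succ x c, ← ih (j + 1) c (by omega)]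
      ring
    rw [qChoose_succ_succ, mul_add, first, second,
      qFact_succ, show j + b + 1 = j + 1 + b by omega, qInt_add x (j + 1) b]
    ring

lemma sum_range_neg_one_pow_mul_qChoose (x : Fq) {n : ℕ} (hn : n ≠ 0) :
    ∑ k ∈ range (n + 1), (-1) ^ k * x ^ k.choose 2 * qChoose x n k = 0 := by
  obtain ⟨m, rfl⟩ := Nat.exists_eq_succ_of_ne_zero hn
  set g : ℕ → Fq := fun k => (-1) ^ k * x ^ (k + 1).choose 2 * qChoose x m k
  have telescope : ∀ k ∈ range (m + 1),
      (-1) ^ (k + 1) * x ^ (k + 1).choose 2 * qChoose x (m + 1) (k + 1) = g (k + 1) - g k := by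
    intro k _
    simp only [g, qChoose_succ_succ, Nat.choose_succ_succ' (k + 1), Nat.choose_one_right,
      pow_add]
    ring
  rw [sum_range_succ', sum_congr rfl telescope, sum_range_sub]
  simp [g, qChoose_eq_zero_of_lt, qChoose]

lemma sum_antidiagonal_neg_one_pow_div_qFact_mul_qFact {x : Fq} (hx : ∀ m ≠ 0, x ^ m ≠ 1)
    (n : ℕ) :
    ∑ p ∈ antidiagonal n, (-1) ^ p.1 * x ^ p.1.choose 2 / (qFact x p.1 * qFact x p.2)
      = if n = 0 then 1 else 0 := by
  have term : ∀ p ∈ antidiagonal n, (-1) ^ p.1 * x ^ p.1.choose 2 / (qFact x p.1 * qFact x p.2)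
      = (-1) ^ p.1 * x ^ p.1.choose 2 * qChoose x n p.1 / qFact x n := by
    rintro ⟨a, b⟩ hp
    rw [HasAntidiagonal.mem_antidiagonal] at hp
    subst hp
    have := qFact_ne_zero hx a
    have := qFact_ne_zero hx b
    rw [eq_div_iff (qFact_ne_zero hx _), ← qFact_mul_qFact_mul_qChoose]
    field_simp
  rw [sum_congr rfl term, ← sum_div, Nat.sum_antidiagonal_eq_sum_range_succ_mk]
  split_ifs with hn
  · simp [hn, qChoose, qFact]
  · rw [sum_range_neg_one_pow_mul_qChoose x hn, zero_div]

lemma coeff_qsin_two_mul (x : Fq) (a : ℕ) : coeff (2 * a) (qsin x) = 0 := by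
  simp [qsin]

lemma coeff_qsin_two_mul_add_one (x : Fq) (a : ℕ) :
    coeff (2 * a + 1) (qsin x) = (-1) ^ a * x ^ (2 * a + 1).choose 2 / qFact x (2 * a + 1) := by
  have half : (2 * a + 1) / 2 = a := by omega
  have exponent : 2 * a ^ 2 + a = (2 * a + 1).choose 2 := by
    rw [Nat.choose_two_right, Nat.add_sub_cancel]
    exact (Nat.div_eq_of_eq_mul_left two_pos (by ring)).symm
  simp [qsin, half, exponent]

lemma coeff_qcos_two_mul (x : Fq) (a : ℕ) :
    coeff (2 * a) (qcos x) = (-1) ^ a / qFact x (2 * a) := by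
  simp [qcos]

lemma coeff_qcos_two_mul_add_one (x : Fq) (a : ℕ) : coeff (2 * a + 1) (qcos x) = 0 := by
  simp [qcos]

lemma coeff_qsin_inv_two_mul_add_one {x : Fq} (hx : x ≠ 0) (a : ℕ) :
    coeff (2 * a + 1) (qsin x⁻¹) = (-1) ^ a / qFact x (2 * a + 1) := by
  rw [coeff_qsin_two_mul_add_one, qFact_inv hx, inv_pow, mul_div_assoc, div_div_eq_mul_div,
    inv_mul_cancel₀ (pow_ne_zero _ hx), mul_one_div, div_eq_mul_one_div]

lemma coeff_qcos_inv_two_mul {x : Fq} (hx : x ≠ 0) (a : ℕ) :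
    coeff (2 * a) (qcos x⁻¹) = (-1) ^ a * x ^ (2 * a).choose 2 / qFact x (2 * a) := by
  rw [coeff_qcos_two_mul, qFact_inv hx, div_div_eq_mul_div]

lemma coeff_qsin_mul_add_coeff_qcos_mul_of_odd (x y z w : Fq) {i j : ℕ} (h : Odd (i + j)) :
    coeff i (qsin x) * coeff j (qsin y) + coeff i (qcos z) * coeff j (qcos w) = 0 := by
  obtain ⟨a, rfl | rfl⟩ := i.even_or_odd' <;> obtain ⟨b, rfl | rfl⟩ := j.even_or_odd'
  · exact absurd h (by simp [parity_simps])
  · simp [coeff_qsin_two_mul, coeff_qcos_two_mul_add_one]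
  · simp [coeff_qsin_two_mul, coeff_qcos_two_mul_add_one]
  · exact absurd h (by simp [parity_simps])

lemma coeff_qsin_mul_add_coeff_qcos_mul_of_eq_two_mul {x : Fq} (hx : x ≠ 0) {i j m : ℕ}
    (h : i + j = 2 * m) :
    coeff i (qsin x) * coeff j (qsin x⁻¹) + coeff i (qcos x⁻¹) * coeff j (qcos x)
      = (-1) ^ m * ((-1) ^ i * x ^ i.choose 2 / (qFact x i * qFact x j)) := by
  obtain ⟨a, rfl | rfl⟩ := i.even_or_odd' <;> obtain ⟨b, rfl | rfl⟩ := j.even_or_odd'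
  · obtain rfl : m = a + b := by omega
    simp only [coeff_qsin_two_mul, coeff_qcos_two_mul, coeff_qcos_inv_two_mul hx, pow_add,
      pow_mul, neg_one_sq, one_pow]
    ring
  · omega
  · omega
  · obtain rfl : m = a + b + 1 := by omega
    simp only [coeff_qsin_two_mul_add_one, coeff_qsin_inv_two_mul_add_one hx,
      coeff_qcos_two_mul_add_one, pow_add, pow_mul, neg_one_sq, one_pow]
    ring

theorem qsin_mul_qsin_inv_add_qcos_mul_qcos_inv {x : Fq} (hx₀ : x ≠ 0)
    (hx : ∀ m ≠ 0, x ^ m ≠ 1) : qsin x * qsin x⁻¹ + qcos x * qcos x⁻¹ = 1 := by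
  ext n
  rw [mul_comm (qcos x), map_add, coeff_mul, coeff_mul, ← sum_add_distrib, coeff_one]
  obtain ⟨m, rfl | rfl⟩ := n.even_or_odd'
  · rw [sum_congr rfl fun p hp => coeff_qsin_mul_add_coeff_qcos_mul_of_eq_two_mul hx₀
      (HasAntidiagonal.mem_antidiagonal.mp hp), ← mul_sum,
      sum_antidiagonal_neg_one_pow_div_qFact_mul_qFact hx]
    rcases eq_or_ne m 0 with rfl | hm <;> simp [*]
  · rw [sum_eq_zero fun p hp => coeff_qsin_mul_add_coeff_qcos_mul_of_odd _ _ _ _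
      (by simp [HasAntidiagonal.mem_antidiagonal.mp hp]), if_neg (by omega)]

lemma qv_pow_ne_one {m : ℕ} (hm : m ≠ 0) : qv ^ m ≠ 1 := by
  intro h
  have : (Polynomial.X : Polynomial ℚ) ^ m = 1 := by
    apply IsFractionRing.injective (Polynomial ℚ) Fq
    rw [map_pow, map_one, RatFunc.algebraMap_X]
    exact h
  simpa [hm] using congrArg Polynomial.natDegree this

theorem q_sine_cosine_pair_2100 :
    qsin qv * qsin qv⁻¹ + qcos qv * qcos qv⁻¹ = 1 :=
  qsin_mul_qsin_inv_add_qcos_mul_qcos_inv RatFunc.X_ne_zero fun _ => qv_pow_ne_one
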